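/- arXiv:1202.4735 — 5 statements merged into one kernel-verified Lean document; each statement's English description precedes it below -/
import Mathlib

section
/- Let ρ ∈ (0, 1/(15π)). There exists N ∈ ℕ such that for every integer n > N, every integer k with k ≠ 0 and k ≠ 2n, every t ∈ [0, ρ], and every λ ∈ ℂ with |λ − (2πn + t)²| ≤ 15πnρ, one has |λ − (2π(n−k) + t)²| > |k|·|2n − k|. -/
/-!
Put `a = 2πn + t` and `b = 2π(n - k) + t`. Then `a² - b² = 2πk · (2π(2n - k) + 2t)` has modulus
at least `2π|k| (2π|2n - k| - 2ρ)`, roughly `4π² |k| |2n - k|`, so by the triangle inequality a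
point `λ` within `15πnρ < n` of `a²` stays far from `b²`. The loss `n` is absorbed because
`n ≤ |k| |2n - k|` for all integers `k ≠ 0, 2n`.
-/

open Real

lemma abs_sq_sub_sq_shift_ge (x y t : ℝ) :
    2 * π * |y| * (2 * π * |2 * x - y| - 2 * |t|) ≤
      |(2 * π * x + t) ^ 2 - (2 * π * (x - y) + t) ^ 2| := by
  have hfactor : (2 * π * x + t) ^ 2 - (2 * π * (x - y) + t) ^ 2
      = (2 * π * y) * (2 * π * (2 * x - y) + 2 * t) := by ring
  have hsum : 2 * π * |2 * x - y| - 2 * |t| ≤ |2 * π * (2 * x - y) + 2 * t| := by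
    have := abs_sub_abs_le_abs_sub (2 * π * (2 * x - y)) (-(2 * t))
    rw [sub_neg_eq_add, abs_mul, abs_of_pos (by positivity : (0 : ℝ) < 2 * π), abs_neg,
      abs_mul, abs_two] at this
    linarith
  rw [hfactor, abs_mul, abs_mul, abs_of_pos (by positivity : (0 : ℝ) < 2 * π)]
  gcongr

lemma Int.le_abs_mul_abs_two_mul_sub {n k : ℤ} (hn : 0 ≤ n) (hk₀ : k ≠ 0) (hk₂ : k ≠ 2 * n) :
    n ≤ |k| * |2 * n - k| := by
  have hk : 1 ≤ |k| := Int.one_le_abs hk₀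
  have hm : 1 ≤ |2 * n - k| := Int.one_le_abs (sub_ne_zero.mpr hk₂.symm)
  have hsum : 2 * n ≤ |k| + |2 * n - k| := by
    simpa [abs_of_nonneg (by omega : 0 ≤ 2 * n)] using abs_add_le k (2 * n - k)
  nlinarith

lemma mul_lt_shifted_gap_sub_radius {P Q n ρ : ℝ} (hP : 1 ≤ P) (hQ : 1 ≤ Q) (hn : 0 ≤ n)
    (hnPQ : n ≤ P * Q)
    (hρ : 15 * π * ρ < 1) :
    P * Q < 2 * π * P * (2 * π * Q - 2 * ρ) - 15 * π * n * ρ := by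
  have hπ : 3 < π := pi_gt_three
  have hPQ : 1 ≤ P * Q := by nlinarith
  have hdisk : 15 * π * n * ρ ≤ P * Q := by nlinarith
  have hshift : 4 * π * ρ * P ≤ P * Q := by nlinarith
  have hmain : 36 * (P * Q) ≤ 4 * π ^ 2 * (P * Q) := by
    have : 9 ≤ π ^ 2 := by nlinarith
    nlinarith
  nlinarith

lemma abs_sub_le_norm_sub_ofReal_add (lam : ℂ) (x y : ℝ) :
    |x - y| ≤ ‖lam - (x : ℂ)‖ + ‖lam - (y : ℂ)‖ := by
  rw [← Real.norm_eq_abs, ← Complex.norm_real, Complex.ofReal_sub, ← norm_sub_rev (x : ℂ)]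
  exact norm_sub_le_norm_sub_add_norm_sub _ _ _

theorem stmt0_general (ρ : ℝ) (hρ₁ : ρ < 1 / (15 * Real.pi)) :
    ∃ N : ℕ, ∀ n : ℤ, (N : ℤ) < n → ∀ k : ℤ, k ≠ 0 → k ≠ 2 * n →
      ∀ t : ℝ, t ∈ Set.Icc (0 : ℝ) ρ → ∀ lam : ℂ,
        ‖lam - (((2 * Real.pi * (n : ℝ) + t) ^ 2 : ℝ) : ℂ)‖ ≤ 15 * Real.pi * (n : ℝ) * ρ →
        (|k| : ℝ) * (|2 * n - k| : ℝ) <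
          ‖lam - (((2 * Real.pi * ((n : ℝ) - (k : ℝ)) + t) ^ 2 : ℝ) : ℂ)‖ := by
  refine ⟨0, fun n hn k hk₀ hk₂ t ⟨ht₀, htρ⟩ lam hlam => ?_⟩
  have hρ : 15 * π * ρ < 1 := by
    rwa [lt_div_iff₀ (by positivity), mul_comm] at hρ₁
  have hnPQ : (n : ℝ) ≤ |(k : ℝ)| * |2 * (n : ℝ) - k| := by
    exact_mod_cast Int.le_abs_mul_abs_two_mul_sub hn.le hk₀ hk₂
  have hP : 1 ≤ |(k : ℝ)| := by exact_mod_cast Int.one_le_abs hk₀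
  have hQ : 1 ≤ |2 * (n : ℝ) - k| := by
    exact_mod_cast Int.one_le_abs (sub_ne_zero.mpr hk₂.symm)
  have hgap := abs_sub_le_norm_sub_ofReal_add lam
    ((2 * π * (n : ℝ) + t) ^ 2) ((2 * π * ((n : ℝ) - k) + t) ^ 2)
  have hdiff := abs_sq_sub_sq_shift_ge n k t
  rw [abs_of_nonneg ht₀] at hdiff
  have hbound := mul_lt_shifted_gap_sub_radius hP hQ (by positivity) hnPQ hρ
  linarith [mul_le_mul_of_nonneg_left htρ (by positivity : (0 : ℝ) ≤ 4 * π * |(k : ℝ)|)]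

/-- Formula (9) of the paper: for `λ` in the disk `U(n,t,ρ)` around `(2πn+t)²`,
the denominators `λ - (2π(n-k)+t)²` with `k ≠ 0, 2n` are bounded below by `|k|·|2n-k|`. -/
theorem stmt0 (ρ : ℝ) (hρ₀ : 0 < ρ) (hρ₁ : ρ < 1 / (15 * Real.pi)) :
    ∃ N : ℕ, ∀ n : ℤ, (N : ℤ) < n → ∀ k : ℤ, k ≠ 0 → k ≠ 2 * n →
      ∀ t : ℝ, t ∈ Set.Icc (0 : ℝ) ρ → ∀ lam : ℂ,
        ‖lam - (((2 * Real.pi * (n : ℝ) + t) ^ 2 : ℝ) : ℂ)‖ ≤ 15 * Real.pi * (n : ℝ) * ρ →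
        (|k| : ℝ) * (|2 * n - k| : ℝ) <
          ‖lam - (((2 * Real.pi * ((n : ℝ) - (k : ℝ)) + t) ^ 2 : ℝ) : ℂ)‖ :=
  stmt0_general ρ hρ₁
end

section
/- Let a, b ∈ ℂ, let ρ ∈ (0, 1/(15π)), and use the admissible-sequence definitions of a_k(λ,t) and a′_k(λ,t) for the Mathieu potential. There exists N ∈ ℕ such that for all integers n > N, all integers m ≥ 1, all t ∈ [0, ρ], and all λ ∈ U(n,t,ρ): a_{2m}(λ,t) = 0 and a′_{2m}(λ,t) = 0, while |a_{2m−1}(λ,t)| ≤ (4|ab|)^m·(2n−1)^{−(2m−1)} and |a′_{2m−1}(λ,t)| ≤ (4|ab|)^m·(2n−1)^{−(2m−1)}. -/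
open Finset

namespace Mathieu

/-- `±1` value attached to a boolean index. -/
def sgn (x : Bool) : ℤ := if x then 1 else -1

/-- Partial sum `n₁ + ⋯ + n_s` of the `±1` sequence encoded by `v`. -/
def psum {k : ℕ} (v : Fin k → Bool) (s : ℕ) : ℤ :=
  ∑ i ∈ Finset.univ.filter (fun i : Fin k => (i : ℕ) < s), sgn (v i)

/-- `n`-admissible sequences: all partial sums avoid `0` and `2n`. -/
def Admissible (n k : ℕ) (v : Fin k → Bool) : Prop :=
  ∀ s : Fin k, psum v ((s : ℕ) + 1) ≠ 0 ∧ psum v ((s : ℕ) + 1) ≠ 2 * (n : ℤ)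

/-- `n`-coadmissible sequences: all partial sums avoid `0` and `-2n`. -/
def Coadmissible (n k : ℕ) (v : Fin k → Bool) : Prop :=
  ∀ s : Fin k, psum v ((s : ℕ) + 1) ≠ 0 ∧ psum v ((s : ℕ) + 1) ≠ -(2 * (n : ℤ))

instance (n k : ℕ) : DecidablePred (Admissible n k) := fun v => by
  unfold Admissible; infer_instance

instance (n k : ℕ) : DecidablePred (Coadmissible n k) := fun v => by
  unfold Coadmissible; infer_instance

/-- Fourier coefficients of the Mathieu potential: `q₋₁ = a`, `q₁ = b`, else `0`. -/
noncomputable def qc (a b : ℂ) (m : ℤ) : ℂ :=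
  if m = -1 then a else if m = 1 then b else 0

/-- Resolvent factor `(λ - (2π(n - j) + t)²)⁻¹`. -/
noncomputable def denom (n : ℕ) (lam : ℂ) (t : ℝ) (j : ℤ) : ℂ :=
  (lam - (((2 * Real.pi * ((n : ℝ) - (j : ℝ)) + t) ^ 2 : ℝ) : ℂ))⁻¹

/-- Resolvent factor `(λ - (2π(n + j) - t)²)⁻¹`. -/
noncomputable def denom' (n : ℕ) (lam : ℂ) (t : ℝ) (j : ℤ) : ℂ :=
  (lam - (((2 * Real.pi * ((n : ℝ) + (j : ℝ)) - t) ^ 2 : ℝ) : ℂ))⁻¹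

/-- The term `a_k(λ,t)` of the perturbation series (formula (13)). -/
noncomputable def ak (a b : ℂ) (n k : ℕ) (lam : ℂ) (t : ℝ) : ℂ :=
  ∑ v ∈ Finset.univ.filter (Admissible n k),
    qc a b (-(psum v k)) *
      ∏ i : Fin k, (qc a b (sgn (v i)) * denom n lam t (psum v ((i : ℕ) + 1)))

/-- The term `b_k(λ,t)` of the perturbation series (formula (14)). -/
noncomputable def bk (a b : ℂ) (n k : ℕ) (lam : ℂ) (t : ℝ) : ℂ :=
  ∑ v ∈ Finset.univ.filter (Admissible n k),
    qc a b (2 * (n : ℤ) - psum v k) *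
      ∏ i : Fin k, (qc a b (sgn (v i)) * denom n lam t (psum v ((i : ℕ) + 1)))

/-- The term `a′_k(λ,t)` of the perturbation series (formula (17)). -/
noncomputable def ak' (a b : ℂ) (n k : ℕ) (lam : ℂ) (t : ℝ) : ℂ :=
  ∑ v ∈ Finset.univ.filter (Coadmissible n k),
    qc a b (-(psum v k)) *
      ∏ i : Fin k, (qc a b (sgn (v i)) * denom' n lam t (psum v ((i : ℕ) + 1)))

/-- The term `b′_k(λ,t)` of the perturbation series (formula (18)). -/
noncomputable def bk' (a b : ℂ) (n k : ℕ) (lam : ℂ) (t : ℝ) : ℂ :=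
  ∑ v ∈ Finset.univ.filter (Coadmissible n k),
    qc a b (-(2 * (n : ℤ)) - psum v k) *
      ∏ i : Fin k, (qc a b (sgn (v i)) * denom' n lam t (psum v ((i : ℕ) + 1)))

/-- `A(λ,t) = Σ_{k≥1} a_k(λ,t)`. -/
noncomputable def Afun (a b : ℂ) (n : ℕ) (lam : ℂ) (t : ℝ) : ℂ := ∑' k : ℕ, ak a b n (k + 1) lam t

/-- `A′(λ,t) = Σ_{k≥1} a′_k(λ,t)`. -/
noncomputable def A'fun (a b : ℂ) (n : ℕ) (lam : ℂ) (t : ℝ) : ℂ := ∑' k : ℕ, ak' a b n (k + 1) lam t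

/-- `B(λ,t) = Σ_{k≥1} b_k(λ,t)`. -/
noncomputable def Bfun (a b : ℂ) (n : ℕ) (lam : ℂ) (t : ℝ) : ℂ := ∑' k : ℕ, bk a b n (k + 1) lam t

/-- `B′(λ,t) = Σ_{k≥1} b′_k(λ,t)`. -/
noncomputable def B'fun (a b : ℂ) (n : ℕ) (lam : ℂ) (t : ℝ) : ℂ := ∑' k : ℕ, bk' a b n (k + 1) lam t

end Mathieu

open Mathieu

/-!
A sequence of `±1` steps of even length has even endpoint, so the leading coefficient
`q_{-(n₁+⋯+n_k)}` of every term of `a_{2m}` and `a′_{2m}` vanishes. For odd length `2m - 1` only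
paths ending at `±1` contribute, each with coefficient product of modulus `|ab|^m`, and there are
at most `2^{2m-1} ≤ 4^m` paths. Every resolvent factor is at most `(2n-1)⁻¹`: the distance from
`(2πn + t)²` to `(2π(n - j) + t)²` factors as `|2πj| · |2π(2n - j) + 2t| ≥ 36 (2n - 1)` for an
integer `j ∉ {0, 2n}`, far more than the radius `15πnρ < n` of `U(n,t,ρ)`.
-/

theorem Int.abs_add_sub_one_le_abs_mul {j x : ℤ} (hj : j ≠ 0) (hx : x ≠ 0) :
    |j + x| - 1 ≤ |j| * |x| := by
  nlinarith [abs_add_le j x, Int.one_le_abs hj, Int.one_le_abs hx]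

theorem Complex.norm_inv_sub_ofReal_le {lam : ℂ} {c e r δ : ℝ} (hδ : 0 < δ)
    (hlam : ‖lam - c‖ ≤ r) (hce : r + δ ≤ |c - e|) : ‖(lam - e)⁻¹‖ ≤ δ⁻¹ := by
  have hdist : |c - e| ≤ ‖lam - c‖ + ‖lam - e‖ :=
    calc |c - e| = ‖(c : ℂ) - e‖ := by
          rw [← Complex.ofReal_sub, Complex.norm_real, Real.norm_eq_abs]
      _ ≤ ‖(c : ℂ) - lam‖ + ‖lam - e‖ := norm_sub_le_norm_sub_add_norm_sub _ _ _
      _ = ‖lam - c‖ + ‖lam - e‖ := by rw [norm_sub_rev]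
  rw [norm_inv]
  exact inv_anti₀ hδ (by linarith)

namespace Mathieu

open Real

theorem six_mul_abs_le_abs_two_pi_mul_add {j : ℤ} (hj : j ≠ 0) {s : ℝ} (hs : |s| ≤ 1 / 5) :
    6 * |(j : ℝ)| ≤ |2 * π * j + s| := by
  have hj1 : (1 : ℝ) ≤ |(j : ℝ)| := by exact_mod_cast Int.one_le_abs hj
  have h2π : |2 * π * j| = 2 * π * |(j : ℝ)| := by
    rw [abs_mul, abs_of_pos (by positivity : (0 : ℝ) < 2 * π)]
  have htri : |2 * π * j| ≤ |2 * π * j + s| + |s| := by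
    simpa using abs_sub (2 * π * j + s) s
  nlinarith [pi_gt_d2]

theorem abs_add_sub_one_le_abs_two_pi_mul {j x : ℤ} (hj : j ≠ 0) (hx : x ≠ 0) {s s' : ℝ}
    (hs : |s| ≤ 1 / 5) (hs' : |s'| ≤ 1 / 5) :
    36 * (|(j : ℝ) + x| - 1) ≤ |(2 * π * j + s) * (2 * π * x + s')| := by
  have hjx : ((|j + x| - 1 : ℤ) : ℝ) ≤ ((|j| * |x| : ℤ) : ℝ) := by
    exact_mod_cast Int.abs_add_sub_one_le_abs_mul hj hx
  push_cast at hjx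
  rw [abs_mul]
  nlinarith [mul_le_mul (six_mul_abs_le_abs_two_pi_mul_add hj hs)
    (six_mul_abs_le_abs_two_pi_mul_add hx hs') (by positivity) (abs_nonneg _)]

theorem norm_inv_sub_le_of_factorization {n : ℕ} (hn : 1 ≤ n) {lam : ℂ} {c e s s' : ℝ}
    (hlam : ‖lam - c‖ ≤ n) {j x : ℤ} (hj : j ≠ 0) (hx : x ≠ 0) (hjx : j + x = 2 * (n : ℤ))
    (hs : |s| ≤ 1 / 5) (hs' : |s'| ≤ 1 / 5) (hce : c - e = (2 * π * j + s) * (2 * π * x + s')) :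
    ‖(lam - e)⁻¹‖ ≤ (2 * (n : ℝ) - 1)⁻¹ := by
  have hn' : (1 : ℝ) ≤ n := by exact_mod_cast hn
  have hgap := abs_add_sub_one_le_abs_two_pi_mul hj hx hs hs'
  rw [← hce, ← Int.cast_add, hjx, Int.cast_mul, Int.cast_two, Int.cast_natCast,
    abs_of_nonneg (by positivity)] at hgap
  exact Complex.norm_inv_sub_ofReal_le (by linarith) hlam (by linarith)

theorem norm_denom_le {n : ℕ} (hn : 1 ≤ n) {lam : ℂ} {t : ℝ} (ht : |t| ≤ 1 / 10)
    (hlam : ‖lam - (((2 * π * n + t) ^ 2 : ℝ) : ℂ)‖ ≤ n) {j : ℤ} (hj0 : j ≠ 0)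
    (hj : j ≠ 2 * (n : ℤ)) : ‖denom n lam t j‖ ≤ (2 * (n : ℝ) - 1)⁻¹ :=
  -- `(2πn + t)² - (2π(n - j) + t)² = 2πj · (2π(2n - j) + 2t)`
  norm_inv_sub_le_of_factorization hn hlam (x := 2 * n - j) hj0 (by omega) (by ring)
    (s := 0) (s' := 2 * t) (by norm_num) (by rw [abs_mul, abs_two]; linarith)
    (by push_cast; ring)

theorem norm_denom'_le {n : ℕ} (hn : 1 ≤ n) {lam : ℂ} {t : ℝ} (ht : |t| ≤ 1 / 10)
    (hlam : ‖lam - (((2 * π * n + t) ^ 2 : ℝ) : ℂ)‖ ≤ n) {j : ℤ} (hj0 : j ≠ 0)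
    (hj : j ≠ -(2 * (n : ℤ))) : ‖denom' n lam t j‖ ≤ (2 * (n : ℝ) - 1)⁻¹ :=
  -- `(2πn + t)² - (2π(n + j) - t)² = (2π(-j) + 2t) · 2π(2n + j)`
  norm_inv_sub_le_of_factorization hn hlam (j := -j) (x := 2 * n + j) (by omega) (by omega)
    (by ring) (s := 2 * t) (s' := 0) (by rw [abs_mul, abs_two]; linarith) (by norm_num)
    (by push_cast; ring)

variable (a b : ℂ)

theorem qc_eq_zero_of_even {m : ℤ} (hm : Even m) : qc a b m = 0 := by
  have h1 : m ≠ 1 := by rintro rfl; exact Int.not_even_one hm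
  have h2 : m ≠ -1 := by rintro rfl; exact Int.not_even_one hm.neg
  simp [qc, h1, h2]

theorem card_filter_true_add_card_filter_false {k : ℕ} (v : Fin k → Bool) :
    (univ.filter fun i => v i = true).card + (univ.filter fun i => ¬v i = true).card = k := by
  rw [card_filter_add_card_filter_not, card_univ, Fintype.card_fin]

theorem psum_eq_card_sub_card {k : ℕ} (v : Fin k → Bool) :
    psum v k =
      (univ.filter fun i => v i = true).card - (univ.filter fun i => ¬v i = true).card := by
  rw [psum, filter_true_of_mem fun i _ => i.isLt]
  simp only [sgn, sum_ite, sum_const, mul_one, mul_neg, nsmul_eq_mul]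
  ring

theorem even_psum {k : ℕ} (hk : Even k) (v : Fin k → Bool) : Even (psum v k) := by
  have := card_filter_true_add_card_filter_false v
  rw [psum_eq_card_sub_card, Int.even_sub, ← Int.even_add, ← Nat.cast_add, this]
  exact_mod_cast hk

theorem prod_norm_qc_sgn {k : ℕ} (v : Fin k → Bool) :
    ∏ i, ‖qc a b (sgn (v i))‖ =
      ‖b‖ ^ (univ.filter fun i => v i = true).card *
        ‖a‖ ^ (univ.filter fun i => ¬v i = true).card := by
  have h : ∀ i, ‖qc a b (sgn (v i))‖ = if v i = true then ‖b‖ else ‖a‖ := fun i => by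
    cases v i <;> simp [qc, sgn]
  rw [prod_congr rfl fun i _ => h i, prod_ite, prod_const, prod_const]

theorem norm_qc_neg_psum_mul_prod_le {m : ℕ} (v : Fin (2 * m + 1) → Bool) :
    ‖qc a b (-psum v (2 * m + 1))‖ * ∏ i, ‖qc a b (sgn (v i))‖ ≤ ‖a * b‖ ^ (m + 1) := by
  have hcard := card_filter_true_add_card_filter_false v
  have hpsum := psum_eq_card_sub_card v
  rw [prod_norm_qc_sgn, norm_mul, mul_pow]
  by_cases h1 : psum v (2 * m + 1) = 1
  · obtain ⟨hT, hF⟩ : (univ.filter fun i => v i = true).card = m + 1 ∧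
        (univ.filter fun i => ¬v i = true).card = m := by omega
    rw [h1, hT, hF, show qc a b (-1) = a by simp [qc]]
    exact le_of_eq (by ring)
  by_cases h2 : psum v (2 * m + 1) = -1
  · obtain ⟨hT, hF⟩ : (univ.filter fun i => v i = true).card = m ∧
        (univ.filter fun i => ¬v i = true).card = m + 1 := by omega
    rw [h2, hT, hF, show qc a b (- -1) = b by simp [qc]]
    exact le_of_eq (by ring)
  have hne1 : -psum v (2 * m + 1) ≠ 1 := by omega
  have hne2 : -psum v (2 * m + 1) ≠ -1 := by omega
  rw [show qc a b (-psum v (2 * m + 1)) = 0 by simp [qc, hne1, hne2], norm_zero, zero_mul]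
  positivity

noncomputable def pathSum (k : ℕ) (P : (Fin k → Bool) → Prop) [DecidablePred P]
    (d : ℤ → ℂ) : ℂ :=
  ∑ v ∈ univ.filter P,
    qc a b (-psum v k) * ∏ i : Fin k, (qc a b (sgn (v i)) * d (psum v ((i : ℕ) + 1)))

variable {a b}

theorem pathSum_eq_zero_of_even {k : ℕ} (hk : Even k) (P : (Fin k → Bool) → Prop)
    [DecidablePred P] (d : ℤ → ℂ) : pathSum a b k P d = 0 :=
  sum_eq_zero fun v _ => by rw [qc_eq_zero_of_even a b (even_psum hk v).neg, zero_mul]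

theorem norm_pathSum_le {m : ℕ} {P : (Fin (2 * m + 1) → Bool) → Prop} [DecidablePred P]
    {d : ℤ → ℂ} {δ : ℝ} (hδ : 0 ≤ δ)
    (hd : ∀ v, P v → ∀ i : Fin (2 * m + 1), ‖d (psum v ((i : ℕ) + 1))‖ ≤ δ) :
    ‖pathSum a b (2 * m + 1) P d‖ ≤ (4 * ‖a * b‖) ^ (m + 1) * δ ^ (2 * m + 1) := by
  have hterm : ∀ v ∈ univ.filter P, ‖qc a b (-psum v (2 * m + 1)) *
      ∏ i : Fin (2 * m + 1), (qc a b (sgn (v i)) * d (psum v ((i : ℕ) + 1)))‖ ≤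
        ‖a * b‖ ^ (m + 1) * δ ^ (2 * m + 1) := fun v hv => by
    rw [norm_mul, norm_prod]
    simp only [norm_mul]
    rw [prod_mul_distrib, ← mul_assoc]
    gcongr
    · simpa only [norm_mul] using norm_qc_neg_psum_mul_prod_le a b v
    · calc ∏ i : Fin (2 * m + 1), ‖d (psum v ((i : ℕ) + 1))‖ ≤ ∏ _i : Fin (2 * m + 1), δ :=
            prod_le_prod (fun _ _ => norm_nonneg _) fun i _ => hd v (mem_filter.1 hv).2 i
        _ = δ ^ (2 * m + 1) := by simp
  have hcard : ((univ.filter P).card : ℝ) ≤ 2 ^ (2 * m + 1) := by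
    exact_mod_cast (card_filter_le _ _).trans_eq (by simp)
  calc ‖pathSum a b (2 * m + 1) P d‖
      ≤ (univ.filter P).card * (‖a * b‖ ^ (m + 1) * δ ^ (2 * m + 1)) :=
        (norm_sum_le _ _).trans (by simpa using sum_le_card_nsmul _ _ _ hterm)
    _ ≤ 2 ^ (2 * m + 1) * (‖a * b‖ ^ (m + 1) * δ ^ (2 * m + 1)) := by gcongr
    _ ≤ 4 ^ (m + 1) * (‖a * b‖ ^ (m + 1) * δ ^ (2 * m + 1)) := by
        gcongr
        calc (2 : ℝ) ^ (2 * m + 1) ≤ 2 ^ (2 * (m + 1)) := pow_le_pow_right₀ one_le_two (by omega)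
          _ = 4 ^ (m + 1) := by rw [pow_mul]; norm_num
    _ = (4 * ‖a * b‖) ^ (m + 1) * δ ^ (2 * m + 1) := by ring

theorem ak_eq_pathSum (n k : ℕ) (lam : ℂ) (t : ℝ) :
    ak a b n k lam t = pathSum a b k (Admissible n k) (denom n lam t) := rfl

theorem ak'_eq_pathSum (n k : ℕ) (lam : ℂ) (t : ℝ) :
    ak' a b n k lam t = pathSum a b k (Coadmissible n k) (denom' n lam t) := rfl

end Mathieu

theorem stmt4_general (a b : ℂ) (ρ : ℝ) (hρ₁ : ρ < 1 / (15 * Real.pi)) :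
    ∃ N : ℕ, ∀ n : ℕ, N < n → ∀ m : ℕ, 1 ≤ m → ∀ t ∈ Set.Icc (0 : ℝ) ρ, ∀ lam : ℂ,
      ‖lam - (((2 * Real.pi * (n : ℝ) + t) ^ 2 : ℝ) : ℂ)‖ ≤ 15 * Real.pi * (n : ℝ) * ρ →
      ak a b n (2 * m) lam t = 0 ∧ ak' a b n (2 * m) lam t = 0 ∧
      ‖ak a b n (2 * m - 1) lam t‖ ≤
        (4 * ‖a * b‖) ^ m * ((2 * (n : ℝ) - 1) ^ (2 * m - 1))⁻¹ ∧
      ‖ak' a b n (2 * m - 1) lam t‖ ≤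
        (4 * ‖a * b‖) ^ m * ((2 * (n : ℝ) - 1) ^ (2 * m - 1))⁻¹ := by
  have hρ : 15 * Real.pi * ρ < 1 := by
    rw [lt_div_iff₀ (by positivity)] at hρ₁
    linarith
  refine ⟨0, fun n hn m hm t ⟨ht₀, htρ⟩ lam hlam => ?_⟩
  obtain ⟨m, rfl⟩ : ∃ m', m = m' + 1 := ⟨m - 1, by omega⟩
  have ht : |t| ≤ 1 / 10 := by
    rw [abs_of_nonneg ht₀]
    nlinarith [Real.pi_gt_three]
  have hlam' : ‖lam - (((2 * Real.pi * (n : ℝ) + t) ^ 2 : ℝ) : ℂ)‖ ≤ n :=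
    hlam.trans (by nlinarith [(Nat.cast_pos.2 hn : (0 : ℝ) < n)])
  have hδ : (0 : ℝ) ≤ (2 * (n : ℝ) - 1)⁻¹ := by
    have : (1 : ℝ) ≤ n := by exact_mod_cast hn
    exact inv_nonneg.2 (by linarith)
  rw [ak_eq_pathSum, ak'_eq_pathSum, ak_eq_pathSum, ak'_eq_pathSum,
    show 2 * (m + 1) - 1 = 2 * m + 1 by omega, ← inv_pow]
  exact ⟨pathSum_eq_zero_of_even (even_two_mul _) _ _,
    pathSum_eq_zero_of_even (even_two_mul _) _ _,
    norm_pathSum_le hδ fun v hv i => norm_denom_le hn ht hlam' (hv i).1 (hv i).2,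
    norm_pathSum_le hδ fun v hv i => norm_denom'_le hn ht hlam' (hv i).1 (hv i).2⟩

/-- Formulas (51)-(52): `a_{2m} = a′_{2m} = 0` and the odd terms satisfy
`|a_{2m-1}| ≤ (4|ab|)^m (2n-1)^{-(2m-1)}` on `U(n,t,ρ)`. -/
theorem stmt4 (a b : ℂ) (ρ : ℝ) (hρ₀ : 0 < ρ) (hρ₁ : ρ < 1 / (15 * Real.pi)) :
    ∃ N : ℕ, ∀ n : ℕ, N < n → ∀ m : ℕ, 1 ≤ m → ∀ t ∈ Set.Icc (0 : ℝ) ρ, ∀ lam : ℂ,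
      ‖lam - (((2 * Real.pi * (n : ℝ) + t) ^ 2 : ℝ) : ℂ)‖ ≤ 15 * Real.pi * (n : ℝ) * ρ →
      ak a b n (2 * m) lam t = 0 ∧ ak' a b n (2 * m) lam t = 0 ∧
      ‖ak a b n (2 * m - 1) lam t‖ ≤
        (4 * ‖a * b‖) ^ m * ((2 * (n : ℝ) - 1) ^ (2 * m - 1))⁻¹ ∧
      ‖ak' a b n (2 * m - 1) lam t‖ ≤
        (4 * ‖a * b‖) ^ m * ((2 * (n : ℝ) - 1) ^ (2 * m - 1))⁻¹ :=
  stmt4_general a b ρ hρ₁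
end

section
/- Let b ∈ ℂ and for an integer n ≥ 1 define f(λ) = b^{2n}·∏_{s=1}^{2n−1} (λ − (2π(n−s))²)^{−1} on a neighborhood of λ = (2πn)². Then f is complex differentiable at (2πn)² and f′((2πn)²) = −β_n·H_{2n−1}/(4π²n), where β_n = b^{2n}·((2π)^{2n−1}·(2n−1)!)^{−2} and H_{2n−1} = ∑_{j=1}^{2n−1} 1/j. -/
/-!
Writing `f(λ) = b^{2n} ∏ (λ - a_s)⁻¹`, the logarithmic derivative gives
`f'(λ₀) = -f(λ₀) ∑ (λ₀ - a_s)⁻¹`. At `λ₀ = (2πn)²` the gaps are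
`λ₀ - a_s = (2π)² s (2n - s)`, and the reflection `s ↦ 2n - s` of `{1, …, 2n-1}` yields
`∏ s (2n - s) = ((2n-1)!)²` and, by partial fractions, `∑ 1 / (s (2n - s)) = H_{2n-1} / n`.
-/

open Finset Nat

theorem hasDerivAt_prod_inv_sub {ι 𝕜 : Type*} [NontriviallyNormedField 𝕜] (t : Finset ι)
    (a : ι → 𝕜) {z : 𝕜} (hz : ∀ i ∈ t, z ≠ a i) :
    HasDerivAt (fun w => ∏ i ∈ t, (w - a i)⁻¹)
      (-(∏ i ∈ t, (z - a i)⁻¹) * ∑ i ∈ t, (z - a i)⁻¹) z := by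
  classical
  induction t using Finset.induction_on with
  | empty => simpa using hasDerivAt_const z (1 : 𝕜)
  | insert i t hi ih =>
    simp only [prod_insert hi, sum_insert hi]
    have hzi : z - a i ≠ 0 := sub_ne_zero.2 (hz i (mem_insert_self i t))
    refine ((((hasDerivAt_id' z).sub_const (a i)).inv hzi).fun_mul
      (ih fun j hj => hz j (mem_insert_of_mem hj))).congr_deriv ?_
    simp only [Pi.inv_apply, div_eq_mul_inv, ← inv_pow]
    ring

theorem prod_Icc_one_reflect {R M : Type*} [AddGroupWithOne R] [CommMonoid M] (m : ℕ)
    (f : R → M) : ∏ s ∈ Icc 1 m, f ((m : R) + 1 - s) = ∏ s ∈ Icc 1 m, f s := by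
  refine prod_nbij' (fun s => m + 1 - s) (fun s => m + 1 - s) ?_ ?_ ?_ ?_ ?_ <;>
    intro s hs <;> simp only [mem_Icc] at hs ⊢
  · omega
  · omega
  · omega
  · omega
  · rw [Nat.cast_sub (by omega)]
    push_cast
    rfl

theorem sum_Icc_one_reflect {R M : Type*} [AddGroupWithOne R] [AddCommMonoid M] (m : ℕ)
    (f : R → M) : ∑ s ∈ Icc 1 m, f ((m : R) + 1 - s) = ∑ s ∈ Icc 1 m, f s :=
  prod_Icc_one_reflect (M := Multiplicative M) m f

theorem prod_Icc_one_id (m : ℕ) : ∏ s ∈ Icc 1 m, s = m ! := by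
  induction m with
  | zero => rfl
  | succ k ih => rw [prod_Icc_succ_top (by omega), ih, Nat.factorial_succ, mul_comm]

theorem mul_reflect_pos_of_mem_Icc {m s : ℕ} (hs : s ∈ Icc 1 m) :
    0 < (s : ℝ) * ((m : ℝ) + 1 - s) := by
  obtain ⟨h1, h2⟩ := mem_Icc.1 hs
  have h1 : (1 : ℝ) ≤ s := by exact_mod_cast h1
  have h2 : (s : ℝ) ≤ m := by exact_mod_cast h2
  exact mul_pos (by linarith) (by linarith)

theorem prod_Icc_one_mul_reflect (m : ℕ) :
    ∏ s ∈ Icc 1 m, ((s : ℝ) * ((m : ℝ) + 1 - s)) = (m ! : ℝ) ^ 2 := by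
  rw [prod_mul_distrib, prod_Icc_one_reflect m (fun x : ℝ => x), ← sq, ← prod_Icc_one_id,
    Nat.cast_prod]

theorem sum_Icc_one_inv_mul_reflect (m : ℕ) :
    ∑ s ∈ Icc 1 m, ((s : ℝ) * ((m : ℝ) + 1 - s))⁻¹
      = 2 / (m + 1) * ∑ s ∈ Icc 1 m, (s : ℝ)⁻¹ := by
  have hsplit : ∀ s ∈ Icc 1 m, ((s : ℝ) * ((m : ℝ) + 1 - s))⁻¹
      = (m + 1 : ℝ)⁻¹ * ((s : ℝ)⁻¹ + ((m : ℝ) + 1 - s)⁻¹) := by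
    intro s hs
    obtain ⟨hs0, hs1⟩ := mul_ne_zero_iff.1 (mul_reflect_pos_of_mem_Icc hs).ne'
    field_simp
    ring
  rw [sum_congr rfl hsplit, ← mul_sum, sum_add_distrib, sum_Icc_one_reflect m (·⁻¹)]
  ring

theorem hasDerivAt_prod_inv_sub_of_reflect_gaps (m : ℕ) {c : ℝ} (hc : c ≠ 0) (a : ℕ → ℂ)
    {z : ℂ} (hgap : ∀ s ∈ Icc 1 m, z - a s = ((c ^ 2 * (s * ((m : ℝ) + 1 - s)) : ℝ) : ℂ)) :
    HasDerivAt (fun w => ∏ s ∈ Icc 1 m, (w - a s)⁻¹)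
      (-(((c ^ m * m !) ^ 2 : ℝ) : ℂ)⁻¹ *
        ((2 / (c ^ 2 * (m + 1)) * ∑ s ∈ Icc 1 m, (s : ℝ)⁻¹ : ℝ) : ℂ)) z := by
  refine (hasDerivAt_prod_inv_sub _ _ fun s hs => ?_).congr_deriv ?_
  · rw [← sub_ne_zero, hgap s hs, Complex.ofReal_ne_zero]
    exact mul_ne_zero (pow_ne_zero 2 hc) (mul_reflect_pos_of_mem_Icc hs).ne'
  have hprod : ∏ s ∈ Icc 1 m, c ^ 2 * ((s : ℝ) * ((m : ℝ) + 1 - s)) = (c ^ m * m !) ^ 2 := by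
    rw [prod_mul_distrib, prod_const, Nat.card_Icc, prod_Icc_one_mul_reflect,
      add_tsub_cancel_right, mul_pow _ (m ! : ℝ), ← pow_mul, ← pow_mul, mul_comm 2 m]
  have hsum : ∑ s ∈ Icc 1 m, (c ^ 2 * ((s : ℝ) * ((m : ℝ) + 1 - s)))⁻¹
      = 2 / (c ^ 2 * (m + 1)) * ∑ s ∈ Icc 1 m, (s : ℝ)⁻¹ := by
    rw [sum_congr rfl fun s _ => mul_inv (c ^ 2) _, ← mul_sum, sum_Icc_one_inv_mul_reflect,
      div_mul_eq_div_div]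
    ring
  rw [prod_congr rfl fun s hs => by rw [hgap s hs], sum_congr rfl fun s hs => by rw [hgap s hs]]
  simp only [← Complex.ofReal_inv, ← Complex.ofReal_prod, ← Complex.ofReal_sum,
    prod_inv_distrib, hprod, hsum]

/-- The exact derivative of `b_{2n-1}(λ,0)` at `λ = (2πn)²` underlying (65)-(66):
`f'((2πn)²) = -β_n H_{2n-1}/(4π²n)`. -/
theorem stmt9 (b : ℂ) (n : ℕ) (hn : 1 ≤ n) :
    HasDerivAt
      (fun lam : ℂ => b ^ (2 * n) *
        ∏ s ∈ Finset.Icc 1 (2 * n - 1),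
          (lam - (((2 * Real.pi * ((n : ℝ) - (s : ℝ))) ^ 2 : ℝ) : ℂ))⁻¹)
      (-(b ^ (2 * n) *
          (((((2 * Real.pi) ^ (2 * n - 1) * ((2 * n - 1).factorial : ℝ)) : ℝ) : ℂ) ^ 2)⁻¹) *
        (((∑ j ∈ Finset.Icc 1 (2 * n - 1), (1 : ℝ) / (j : ℝ)) / (4 * Real.pi ^ 2 * (n : ℝ)) : ℝ) : ℂ))
      (((2 * Real.pi * (n : ℝ)) ^ 2 : ℝ) : ℂ) := by
  set m := 2 * n - 1
  have hm : (m : ℝ) + 1 = 2 * n := by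
    norm_cast
    omega
  have hgap : ∀ s ∈ Icc 1 m, (((2 * Real.pi * n) ^ 2 : ℝ) : ℂ)
      - (((2 * Real.pi * (n - s)) ^ 2 : ℝ) : ℂ)
      = (((2 * Real.pi) ^ 2 * (s * ((m : ℝ) + 1 - s)) : ℝ) : ℂ) := by
    intro s _
    rw [hm]
    push_cast
    ring
  refine ((hasDerivAt_prod_inv_sub_of_reflect_gaps m (by positivity) _ hgap).const_mul
    (b ^ (2 * n))).congr_deriv ?_
  rw [hm]
  simp only [one_div]
  push_cast
  field_simp
  ring
end

section
/- Let b ∈ ℂ and set β_n = b^{2n}·((2π)^{2n−1}·(2n−1)!)^{−2}. For every M > 0 there exist K > 0 and N ∈ ℕ such that for all integers n > N, all t ∈ [0, n^{−3}], and all λ ∈ ℂ with |λ − (2πn)²| ≤ M·n^{−2}: |b^{2n}·∏_{s=1}^{2n−1} (λ − (2π(n−s) + t)²)^{−1} − β_n| ≤ K·|β_n|·n^{−2}. -/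
/-!
Write `μ = (2πn)²`. Each factor `λ - (2π(n-s) + t)²` is the real number
`(2π)² s (2n - s) = μ - (2π(n-s))²`, which is at least `n`, plus an error of size `O(n⁻²)`
coming from `λ - μ` and from the shift `t ≤ n⁻³`; so every factor has relative error
`O(n⁻³)`. Since `∏_{s=1}^{2n-1} s (2n - s) = ((2n-1)!)²`, the unperturbed product is
exactly `((2π)^{2n-1} (2n-1)!)²`, and the `2n - 1` relative errors add up to `O(n⁻²)`.
-/

open Finset Nat Real

theorem prod_Icc_succ_sub_eq_factorial (k : ℕ) : ∏ s ∈ Icc 1 k, (k + 1 - s) = k ! := by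
  rw [← Ico_add_one_right_eq_Icc, prod_Ico_reflect (fun j => j) 1 (Nat.le_succ _),
    Nat.add_sub_cancel_left, Nat.add_sub_cancel, prod_Ico_id_eq_factorial]

theorem prod_Icc_sq_mul_mul_succ_sub {R : Type*} [CommRing R] (a : R) (k : ℕ) :
    ∏ s ∈ Icc 1 k, a ^ 2 * s * (k + 1 - s) = (a ^ k * k !) ^ 2 := by
  have hsub : ∏ s ∈ Icc 1 k, ((k : R) + 1 - s) = k ! := by
    rw [← prod_Icc_succ_sub_eq_factorial, Nat.cast_prod]
    refine prod_congr rfl fun s hs => ?_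
    rw [Nat.cast_sub (by simp at hs; omega)]
    push_cast; ring
  rw [prod_mul_distrib, prod_mul_distrib, prod_const, Nat.card_Icc, Nat.add_sub_cancel, hsub,
    ← Nat.cast_prod, ← Ico_add_one_right_eq_Icc, prod_Ico_id_eq_factorial]
  ring

theorem prod_Icc_sq_mul_mul_two_mul_sub {R : Type*} [CommRing R] (a : R) {n : ℕ} (hn : 0 < n) :
    ∏ s ∈ Icc 1 (2 * n - 1), a ^ 2 * s * (2 * n - s) = (a ^ (2 * n - 1) * (2 * n - 1)!) ^ 2 := by
  have := prod_Icc_sq_mul_mul_succ_sub a (2 * n - 1)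
  rwa [← Nat.cast_add_one, Nat.sub_add_cancel (by omega), Nat.cast_mul, Nat.cast_ofNat] at this

theorem norm_div_sub_one_le_of_norm_sub_le {K : Type*} [NormedField K] {z w : K} {ε : ℝ}
    (hε : ε ≤ 1 / 2) (hw : w ≠ 0) (h : ‖z - w‖ ≤ ε * ‖w‖) : ‖w / z - 1‖ ≤ 2 * ε := by
  have hw0 : 0 < ‖w‖ := norm_pos_iff.mpr hw
  have hε0 : 0 ≤ ε := nonneg_of_mul_nonneg_left ((norm_nonneg _).trans h) hw0
  have hz : ‖w‖ / 2 ≤ ‖z‖ := by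
    have := norm_le_norm_add_norm_sub' w z
    rw [norm_sub_rev] at this
    nlinarith
  have hz0 : z ≠ 0 := norm_pos_iff.mp (by linarith)
  rw [div_sub_one hz0, norm_div, norm_sub_rev, div_le_iff₀ (by linarith)]
  nlinarith

theorem norm_prod_inv_sub_inv_prod_le {ι K : Type*} [NormedField K] (S : Finset ι) {z w : ι → K}
    {ε : ℝ} (hε : ε ≤ 1 / 2) (hw : ∀ s ∈ S, w s ≠ 0) (h : ∀ s ∈ S, ‖z s - w s‖ ≤ ε * ‖w s‖) :
    ‖∏ s ∈ S, (z s)⁻¹ - (∏ s ∈ S, w s)⁻¹‖ ≤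
      ‖(∏ s ∈ S, w s)⁻¹‖ * (exp (2 * ε * #S) - 1) := by
  have hW : ∏ s ∈ S, w s ≠ 0 := prod_ne_zero_iff.mpr hw
  have hfactor : ∏ s ∈ S, (z s)⁻¹ - (∏ s ∈ S, w s)⁻¹ =
      (∏ s ∈ S, w s)⁻¹ * (∏ s ∈ S, (1 + (w s / z s - 1)) - 1) := by
    simp only [add_sub_cancel, div_eq_mul_inv, prod_mul_distrib]
    field_simp
  rw [hfactor, norm_mul]
  gcongr
  refine (norm_prod_one_add_sub_one_le S _).trans ?_
  gcongr
  calc ∑ s ∈ S, ‖w s / z s - 1‖ ≤ ∑ s ∈ S, 2 * ε :=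
        sum_le_sum fun s hs => norm_div_sub_one_le_of_norm_sub_le hε (hw s hs) (h s hs)
    _ = 2 * ε * #S := by rw [sum_const, nsmul_eq_mul, mul_comm]

theorem norm_prod_inv_sub_inv_prod_le_mul_card {ι K : Type*} [NormedField K] (S : Finset ι)
    {z w : ι → K} {ε : ℝ} (hε : ε ≤ 1 / 2) (hεS : 2 * ε * #S ≤ 1) (hw : ∀ s ∈ S, w s ≠ 0)
    (h : ∀ s ∈ S, ‖z s - w s‖ ≤ ε * ‖w s‖) :
    ‖∏ s ∈ S, (z s)⁻¹ - (∏ s ∈ S, w s)⁻¹‖ ≤ ‖(∏ s ∈ S, w s)⁻¹‖ * (4 * ε * #S) := by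
  refine (norm_prod_inv_sub_inv_prod_le S hε hw h).trans ?_
  gcongr
  have hε0 : 0 ≤ 2 * ε * #S := by
    obtain rfl | ⟨s, hs⟩ := S.eq_empty_or_nonempty
    · simp
    · have := nonneg_of_mul_nonneg_left ((norm_nonneg _).trans (h s hs))
        (norm_pos_iff.mpr (hw s hs))
      positivity
  calc exp (2 * ε * #S) - 1 ≤ 2 * |2 * ε * #S| :=
        (le_abs_self _).trans (abs_exp_sub_one_le (abs_le.mpr ⟨by linarith, hεS⟩))
    _ = 4 * ε * #S := by rw [abs_of_nonneg hε0]; ring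

theorem le_mul_mul_two_mul_sub {a n s : ℝ} (ha : 1 ≤ a) (h1 : 1 ≤ s) (h2 : s ≤ 2 * n - 1) :
    n ≤ a * s * (2 * n - s) := by
  have hs : n ≤ s * (2 * n - s) := by
    nlinarith [mul_nonneg (sub_nonneg.mpr h1) (sub_nonneg.mpr h2)]
  rw [mul_assoc]
  exact hs.trans (le_mul_of_one_le_left (by linarith) ha)

theorem abs_mul_mul_add_sq_le {a d t n : ℝ} (ha : 0 ≤ a) (hn : 1 ≤ n) (hd : |d| ≤ n)
    (ht0 : 0 ≤ t) (ht : t ≤ (n ^ 3)⁻¹) : |a * d * t + t ^ 2| ≤ (a + 1) * (n ^ 2)⁻¹ := by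
  have hnt : n * t ≤ (n ^ 2)⁻¹ := by
    calc n * t ≤ n * (n ^ 3)⁻¹ := by gcongr
      _ = (n ^ 2)⁻¹ := by field_simp
  have ht1 : t ≤ 1 := ht.trans (inv_le_one_of_one_le₀ (one_le_pow₀ hn))
  calc |a * d * t + t ^ 2| ≤ a * (|d| * t) + t ^ 2 := by
        refine (abs_add_le _ _).trans_eq ?_
        rw [abs_mul, abs_mul, abs_of_nonneg ha, abs_of_nonneg ht0, abs_of_nonneg (sq_nonneg t),
          mul_assoc]
    _ ≤ a * (n ^ 2)⁻¹ + (n ^ 2)⁻¹ := by gcongr <;> nlinarith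
    _ = (a + 1) * (n ^ 2)⁻¹ := by ring

theorem norm_sub_sq_shift_sub_le {M n s t : ℝ} {lam : ℂ} (hn : 1 ≤ n) (hs : |n - s| ≤ n)
    (ht0 : 0 ≤ t) (ht : t ≤ (n ^ 3)⁻¹)
    (hlam : ‖lam - (((2 * π * n) ^ 2 : ℝ) : ℂ)‖ ≤ M * (n ^ 2)⁻¹) :
    ‖lam - (((2 * π * (n - s) + t) ^ 2 : ℝ) : ℂ) - (((2 * π) ^ 2 * s * (2 * n - s) : ℝ) : ℂ)‖ ≤
      (M + 4 * π + 1) * (n ^ 2)⁻¹ := by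
  have hsplit : lam - (((2 * π * (n - s) + t) ^ 2 : ℝ) : ℂ) -
      (((2 * π) ^ 2 * s * (2 * n - s) : ℝ) : ℂ) =
      (lam - (((2 * π * n) ^ 2 : ℝ) : ℂ)) - ((4 * π * (n - s) * t + t ^ 2 : ℝ) : ℂ) := by
    push_cast; ring
  rw [hsplit]
  calc _ ≤ M * (n ^ 2)⁻¹ + (4 * π + 1) * (n ^ 2)⁻¹ := by
        refine (norm_sub_le _ _).trans (add_le_add hlam ?_)
        rw [Complex.norm_real, Real.norm_eq_abs]
        exact abs_mul_mul_add_sq_le (by positivity) hn hs ht0 ht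
    _ = (M + 4 * π + 1) * (n ^ 2)⁻¹ := by ring

theorem le_two_pi_sq_mul_mul_sub {n s : ℕ} (hs : s ∈ Icc 1 (2 * n - 1)) :
    (n : ℝ) ≤ (2 * π) ^ 2 * s * (2 * n - s) := by
  obtain ⟨h1, h2⟩ := mem_Icc.mp hs
  have h2' : (s : ℝ) + 1 ≤ 2 * n := by exact_mod_cast (by omega : s + 1 ≤ 2 * n)
  exact le_mul_mul_two_mul_sub (by nlinarith [pi_gt_three]) (by exact_mod_cast h1) (by linarith)

theorem norm_sub_sq_shift_sub_le_mul_norm {M t : ℝ} {n s : ℕ} {lam : ℂ}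
    (hs : s ∈ Icc 1 (2 * n - 1)) (ht0 : 0 ≤ t) (ht : t ≤ ((n : ℝ) ^ 3)⁻¹)
    (hlam : ‖lam - (((2 * π * n) ^ 2 : ℝ) : ℂ)‖ ≤ M * ((n : ℝ) ^ 2)⁻¹) :
    ‖lam - (((2 * π * (n - s) + t) ^ 2 : ℝ) : ℂ) - (((2 * π) ^ 2 * s * (2 * n - s) : ℝ) : ℂ)‖ ≤
      (M + 4 * π + 1) / n ^ 3 * ‖(((2 * π) ^ 2 * s * (2 * n - s) : ℝ) : ℂ)‖ := by
  obtain ⟨h1, h2⟩ := mem_Icc.mp hs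
  have hn1 : (1 : ℝ) ≤ n := by exact_mod_cast (by omega : 1 ≤ n)
  have hsn : |(n : ℝ) - s| ≤ n := by
    have h2' : (s : ℝ) + 1 ≤ 2 * n := by exact_mod_cast (by omega : s + 1 ≤ 2 * n)
    have h1' : (1 : ℝ) ≤ s := by exact_mod_cast h1
    exact abs_le.mpr ⟨by linarith, by linarith⟩
  have hM : 0 ≤ M := nonneg_of_mul_nonneg_left ((norm_nonneg _).trans hlam) (by positivity)
  have hW := le_two_pi_sq_mul_mul_sub hs
  rw [Complex.norm_real, Real.norm_of_nonneg (by linarith)]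
  calc _ ≤ (M + 4 * π + 1) * ((n : ℝ) ^ 2)⁻¹ := norm_sub_sq_shift_sub_le hn1 hsn ht0 ht hlam
    _ = (M + 4 * π + 1) / n ^ 3 * n := by field_simp
    _ ≤ _ := by gcongr

/-- Formula (67): uniformly for `t ∈ [0, n⁻³]` and `|λ - (2πn)²| ≤ M n⁻²`,
`b_{2n-1}(λ,t) = β_n (1 + O(n⁻²))` where `β_n = b^{2n}((2π)^{2n-1}(2n-1)!)⁻²`. -/
theorem stmt10 (b : ℂ) (M : ℝ) (hM : 0 < M) :
    ∃ K : ℝ, 0 < K ∧ ∃ N : ℕ, ∀ n : ℕ, N < n →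
      ∀ t : ℝ, t ∈ Set.Icc (0 : ℝ) (((n : ℝ) ^ 3)⁻¹) →
      ∀ lam : ℂ, ‖(lam - (((2 * Real.pi * (n : ℝ)) ^ 2 : ℝ) : ℂ))‖ ≤ M * ((n : ℝ) ^ 2)⁻¹ →
        ‖(b ^ (2 * n) *
              (∏ s ∈ Finset.Icc 1 (2 * n - 1),
                (lam - (((2 * Real.pi * ((n : ℝ) - (s : ℝ)) + t) ^ 2 : ℝ) : ℂ))⁻¹) -
              b ^ (2 * n) *
                (((((2 * Real.pi) ^ (2 * n - 1) * ((2 * n - 1).factorial : ℝ)) : ℝ) : ℂ) ^ 2)⁻¹)‖ ≤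
          K * ‖(b ^ (2 * n) *
                (((((2 * Real.pi) ^ (2 * n - 1) * ((2 * n - 1).factorial : ℝ)) : ℝ) : ℂ) ^ 2)⁻¹)‖ *
            ((n : ℝ) ^ 2)⁻¹ := by
  set c := M + 4 * π + 1
  have hc : 1 ≤ c := by linarith [pi_pos]
  refine ⟨8 * c, by linarith, ⌈4 * c⌉₊, fun n hn t ⟨ht0, ht⟩ lam hlam => ?_⟩
  have hnc : 4 * c < n := Nat.lt_of_ceil_lt hn
  have hn3 : (0 : ℝ) < n ^ 3 := pow_pos (by linarith) 3
  have hprod : ∏ s ∈ Icc 1 (2 * n - 1), (((2 * π) ^ 2 * s * (2 * n - s) : ℝ) : ℂ) =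
      (((2 * π) ^ (2 * n - 1) * ((2 * n - 1)! : ℝ) : ℝ) : ℂ) ^ 2 := by
    rw [← Complex.ofReal_pow, ← Complex.ofReal_prod, prod_Icc_sq_mul_mul_two_mul_sub _ (by omega)]
  have hcard : (#(Icc 1 (2 * n - 1)) : ℝ) = 2 * n - 1 := by
    rw [Nat.card_Icc, Nat.add_sub_cancel, Nat.cast_pred (by omega)]; push_cast; ring
  have hε : c / n ^ 3 ≤ 1 / 2 := by rw [div_le_iff₀ hn3]; nlinarith
  have hεS : 2 * (c / n ^ 3) * #(Icc 1 (2 * n - 1)) ≤ 1 := by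
    rw [hcard, mul_comm, ← mul_assoc, ← mul_div_assoc, div_le_one hn3]; nlinarith
  have hbound : 4 * (c / n ^ 3) * #(Icc 1 (2 * n - 1)) ≤ 8 * c * ((n : ℝ) ^ 2)⁻¹ := by
    calc _ ≤ 4 * (c / n ^ 3) * (2 * n) := by rw [hcard]; gcongr; linarith
      _ = 8 * c * ((n : ℝ) ^ 2)⁻¹ := by field_simp; ring
  have key := norm_prod_inv_sub_inv_prod_le_mul_card _ hε hεS
    (fun s hs => Complex.ofReal_ne_zero.mpr (by linarith [le_two_pi_sq_mul_mul_sub hs]))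
    (fun s hs => norm_sub_sq_shift_sub_le_mul_norm hs ht0 ht hlam)
  rw [← hprod, ← mul_sub, norm_mul, norm_mul]
  calc _ ≤ ‖b ^ (2 * n)‖ * (‖(∏ s ∈ Icc 1 (2 * n - 1),
        (((2 * π) ^ 2 * s * (2 * n - s) : ℝ) : ℂ))⁻¹‖ * (8 * c * ((n : ℝ) ^ 2)⁻¹)) := by
          gcongr; exact key.trans (by gcongr)
    _ = _ := by ring
end

section
/- For every M > 0 there exist K > 0 and N ∈ ℕ such that for all integers n > N, all t ∈ [0, n^{−3}], and all λ ∈ ℂ with |λ − (2πn)²| ≤ M/n: ∑_{s=2}^{2n−1} (|λ − (2π(n−s+1) + t)²|·|λ − (2π(n−s) + t)²|)^{−1} ≤ K/n². -/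
/-!
Writing `λ = (2πn)² + O(1/n)`, each factor satisfies `|λ - (2πj + t)²| ≥ n² - j²` for `|j| ≤ n - 1`,
since `(2πn)² - (2πj)² = 4π²(n² - j²)` dominates the perturbations by `t` and `λ`. With
`a = s - 1` and `c = 2n - s` both factors are at least `ac`, where `a + c = 2n - 1`. Then
`1/(ac) = (1/a + 1/c)/(a + c)` gives `1/(ac)² ≤ 2(1/a² + 1/c²)/(2n - 1)²`, and `∑ 1/k² ≤ 2`.
-/

open Finset

lemma inv_sq_mul_le_of_pos {a c : ℝ} (ha : 0 < a) (hc : 0 < c) :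
    ((a * c) ^ 2)⁻¹ ≤ 2 / (a + c) ^ 2 * ((a ^ 2)⁻¹ + (c ^ 2)⁻¹) := by
  have hac : (a * c)⁻¹ = (a + c)⁻¹ * (a⁻¹ + c⁻¹) := by field_simp; ring
  rw [← inv_pow, ← inv_pow a, ← inv_pow c, hac, mul_pow, div_eq_mul_inv, ← inv_pow, mul_comm 2,
    mul_assoc]
  gcongr
  nlinarith [sq_nonneg (a⁻¹ - c⁻¹)]

lemma sum_Ioo_inv_sq_sub_le (m : ℕ) :
    ∑ k ∈ Ioo 0 m, (((m : ℝ) - k) ^ 2)⁻¹ ≤ 2 := by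
  have reflect : ∑ k ∈ Ioo 0 m, (((m : ℝ) - k) ^ 2)⁻¹ = ∑ k ∈ Ioo 0 m, ((k : ℝ) ^ 2)⁻¹ := by
    refine sum_nbij' (m - ·) (m - ·) ?_ ?_ ?_ ?_ fun k hk => ?_
    any_goals intro k hk; simp only [mem_Ioo] at hk ⊢; omega
    rw [Nat.cast_sub (mem_Ioo.mp hk).2.le]
  simpa [reflect] using sum_Ioo_inv_sq_le (α := ℝ) 0 m

lemma sum_Ioo_inv_sq_mul_sub_le (m : ℕ) :
    ∑ k ∈ Ioo 0 m, (((k : ℝ) * (m - k)) ^ 2)⁻¹ ≤ 8 / (m : ℝ) ^ 2 := by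
  calc ∑ k ∈ Ioo 0 m, (((k : ℝ) * (m - k)) ^ 2)⁻¹
      ≤ ∑ k ∈ Ioo 0 m, 2 / (m : ℝ) ^ 2 * (((k : ℝ) ^ 2)⁻¹ + (((m : ℝ) - k) ^ 2)⁻¹) := by
        refine sum_le_sum fun k hk => ?_
        obtain ⟨hk0, hkm⟩ := mem_Ioo.mp hk
        have hkm' : (k : ℝ) < m := by exact_mod_cast hkm
        simpa using inv_sq_mul_le_of_pos (a := k) (c := m - k) (by positivity) (by linarith)
    _ = 2 / (m : ℝ) ^ 2 *
          (∑ k ∈ Ioo 0 m, ((k : ℝ) ^ 2)⁻¹ + ∑ k ∈ Ioo 0 m, (((m : ℝ) - k) ^ 2)⁻¹) := by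
        rw [← mul_sum, sum_add_distrib]
    _ ≤ 2 / (m : ℝ) ^ 2 * (2 + 2) := by
        gcongr
        · simpa using sum_Ioo_inv_sq_le (α := ℝ) 0 m
        · exact sum_Ioo_inv_sq_sub_le m
    _ = 8 / (m : ℝ) ^ 2 := by ring

lemma sub_sq_le_norm_sub_sq {M n j t : ℝ} {lam : ℂ} (hn : 1 ≤ n) (hMn : M ≤ n)
    (hj : |j| ≤ n - 1) (ht : |t| ≤ n⁻¹)
    (hlam : ‖lam - (((2 * Real.pi * n) ^ 2 : ℝ) : ℂ)‖ ≤ M / n) :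
    n ^ 2 - j ^ 2 ≤ ‖lam - (((2 * Real.pi * j + t) ^ 2 : ℝ) : ℂ)‖ := by
  have htri : (2 * Real.pi * n) ^ 2 - (2 * Real.pi * j + t) ^ 2
      ≤ ‖lam - (((2 * Real.pi * j + t) ^ 2 : ℝ) : ℂ)‖ + M / n := by
    calc _ ≤ ‖(((2 * Real.pi * n) ^ 2 : ℝ) : ℂ) - (((2 * Real.pi * j + t) ^ 2 : ℝ) : ℂ)‖ := by
          rw [← Complex.ofReal_sub, Complex.norm_real, Real.norm_eq_abs]
          exact le_abs_self _
      _ ≤ _ := by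
          rw [norm_sub_rev] at hlam
          linarith [norm_sub_le_norm_sub_add_norm_sub (((2 * Real.pi * n) ^ 2 : ℝ) : ℂ) lam
            (((2 * Real.pi * j + t) ^ 2 : ℝ) : ℂ)]
  have hn0 : 0 < n := by linarith
  have hjt : |j * t| ≤ 1 := by
    rw [abs_mul]
    calc |j| * |t| ≤ n * n⁻¹ := by gcongr; linarith
      _ = 1 := mul_inv_cancel₀ hn0.ne'
  have ht2 : t ^ 2 ≤ 1 := by
    rw [← sq_abs]
    nlinarith [abs_nonneg t, inv_le_one_of_one_le₀ hn]
  have hMn' : M / n ≤ 1 := (div_le_one hn0).mpr hMn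
  have hnj : 1 ≤ n ^ 2 - j ^ 2 := by nlinarith [sq_abs j, abs_nonneg j]
  have hπ9 : 9 * (n ^ 2 - j ^ 2) ≤ Real.pi ^ 2 * (n ^ 2 - j ^ 2) := by
    gcongr
    nlinarith [Real.pi_gt_three]
  have hπjt : Real.pi * (j * t) ≤ 4 := by
    nlinarith [Real.pi_pos, Real.pi_le_four, (abs_le.mp hjt).2]
  have hexp : (2 * Real.pi * n) ^ 2 - (2 * Real.pi * j + t) ^ 2
      = 4 * (Real.pi ^ 2 * (n ^ 2 - j ^ 2)) - 4 * (Real.pi * (j * t)) - t ^ 2 := by ring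
  linarith

lemma inv_norm_mul_norm_le {M n t s : ℝ} {lam : ℂ} (hn : 1 ≤ n) (hMn : M ≤ n)
    (hs₁ : 2 ≤ s) (hs₂ : s ≤ 2 * n - 1) (ht : |t| ≤ n⁻¹)
    (hlam : ‖lam - (((2 * Real.pi * n) ^ 2 : ℝ) : ℂ)‖ ≤ M / n) :
    (‖lam - (((2 * Real.pi * (n - s + 1) + t) ^ 2 : ℝ) : ℂ)‖ *
      ‖lam - (((2 * Real.pi * (n - s) + t) ^ 2 : ℝ) : ℂ)‖)⁻¹ ≤ (((s - 1) * (2 * n - s)) ^ 2)⁻¹ := by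
  have h₁ := sub_sq_le_norm_sub_sq (j := n - s + 1) hn hMn
    (abs_le.mpr ⟨by linarith, by linarith⟩) ht hlam
  have h₂ := sub_sq_le_norm_sub_sq (j := n - s) hn hMn
    (abs_le.mpr ⟨by linarith, by linarith⟩) ht hlam
  have hpos : 0 < (s - 1) * (2 * n - s) := by nlinarith
  apply inv_anti₀ (by positivity)
  rw [sq]
  gcongr
  · nlinarith
  · nlinarith

theorem stmt11_general (M : ℝ) :
    ∃ K : ℝ, 0 < K ∧ ∃ N : ℕ, ∀ n : ℕ, N < n →
      ∀ t : ℝ, t ∈ Set.Icc (0 : ℝ) (((n : ℝ) ^ 3)⁻¹) →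
      ∀ lam : ℂ, Norm.norm (lam - (((2 * Real.pi * (n : ℝ)) ^ 2 : ℝ) : ℂ)) ≤ M / n →
        ∑ s ∈ Finset.Icc 2 (2 * n - 1),
            (Norm.norm (lam - (((2 * Real.pi * ((n : ℝ) - (s : ℝ) + 1) + t) ^ 2 : ℝ) : ℂ)) *
              Norm.norm (lam - (((2 * Real.pi * ((n : ℝ) - (s : ℝ)) + t) ^ 2 : ℝ) : ℂ)))⁻¹ ≤
          K / (n : ℝ) ^ 2 := by
  refine ⟨8, by norm_num, ⌈M⌉₊, fun n hn t ht lam hlam => ?_⟩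
  have hn₁ : 1 ≤ n := by omega
  have hn₁' : (1 : ℝ) ≤ n := by exact_mod_cast hn₁
  have hMn : M ≤ n := (Nat.le_ceil M).trans (by exact_mod_cast hn.le)
  have ht' : |t| ≤ (n : ℝ)⁻¹ := by
    rw [abs_of_nonneg ht.1]
    exact ht.2.trans (inv_anti₀ (by positivity) (le_self_pow₀ hn₁' (by norm_num)))
  have hm : ((2 * n - 1 : ℕ) : ℝ) = 2 * n - 1 := by
    push_cast [Nat.cast_sub (by omega : 1 ≤ 2 * n)]; ring
  calc _ ≤ ∑ s ∈ Icc 2 (2 * n - 1), ((((s : ℝ) - 1) * (2 * n - s)) ^ 2)⁻¹ := by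
        refine sum_le_sum fun s hs => inv_norm_mul_norm_le hn₁' hMn ?_ ?_ ht' hlam
        · exact_mod_cast (mem_Icc.mp hs).1
        · rw [← hm]; exact_mod_cast (mem_Icc.mp hs).2
    _ = ∑ k ∈ Ioo 0 (2 * n - 1), (((k : ℝ) * ((2 * n - 1 : ℕ) - k)) ^ 2)⁻¹ := by
        refine sum_nbij' (· - 1) (· + 1) ?_ ?_ ?_ ?_ fun s hs => ?_
        any_goals intro s hs; simp only [mem_Ioo, mem_Icc] at hs ⊢; omega
        rw [hm, Nat.cast_sub (one_le_two.trans (mem_Icc.mp hs).1)]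
        ring_nf
    _ ≤ 8 / ((2 * n - 1 : ℕ) : ℝ) ^ 2 := sum_Ioo_inv_sq_mul_sub_le _
    _ ≤ 8 / (n : ℝ) ^ 2 := by
        rw [hm]
        gcongr
        linarith

/-- The estimate in the proof of formula (70): for `t ∈ [0, n⁻³]` and
`|λ - (2πn)²| ≤ M/n`, the sum `∑_{s=2}^{2n-1} (|λ - (2π(n-s+1)+t)²|·|λ - (2π(n-s)+t)²|)⁻¹`
is `O(n⁻²)`. -/
theorem stmt11 (M : ℝ) (hM : 0 < M) :
    ∃ K : ℝ, 0 < K ∧ ∃ N : ℕ, ∀ n : ℕ, N < n →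
      ∀ t : ℝ, t ∈ Set.Icc (0 : ℝ) (((n : ℝ) ^ 3)⁻¹) →
      ∀ lam : ℂ, Norm.norm (lam - (((2 * Real.pi * (n : ℝ)) ^ 2 : ℝ) : ℂ)) ≤ M / n →
        ∑ s ∈ Finset.Icc 2 (2 * n - 1),
            (Norm.norm (lam - (((2 * Real.pi * ((n : ℝ) - (s : ℝ) + 1) + t) ^ 2 : ℝ) : ℂ)) *
              Norm.norm (lam - (((2 * Real.pi * ((n : ℝ) - (s : ℝ)) + t) ^ 2 : ℝ) : ℂ)))⁻¹ ≤
          K / (n : ℝ) ^ 2 :=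
  stmt11_general M
end
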